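/- arXiv:2502.19321 — 4 statements merged into one kernel-verified Lean document; each statement's English description precedes it below -/
import Mathlib

section
/- Let x_{k+1} = F(k)x_k, y_k = H(k)x_k (autonomous case) and suppose F(k) = F + G·H(k) for fixed matrices F, G, where F satisfies F^m = 0. If x_0 lies in the kernel of the m-step observability matrix (i.e., H(0)x_0 = 0, H(1)F(0)x_0 = 0, …, H(m-1)∏_{j=0}^{m-2}F(j) x_0 = 0), then ∏_{j=0}^{m-1} F(j) x_0 = 0. Hence ker O_m ⊆ ker ∏_{j=0}^{m-1} F(j). -/
open Matrix

def stateProd {n : ℕ} (F : ℕ → Matrix (Fin n) (Fin n) ℝ) : ℕ → Matrix (Fin n) (Fin n) ℝ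
  | 0 => 1
  | k + 1 => F k * stateProd F k

theorem ker_obs_subset_ker_prod {nx ny : ℕ} (m : ℕ)
    (F : Matrix (Fin nx) (Fin nx) ℝ) (G : Matrix (Fin nx) (Fin ny) ℝ)
    (H : ℕ → Matrix (Fin ny) (Fin nx) ℝ)
    (Fv : ℕ → Matrix (Fin nx) (Fin nx) ℝ)
    (hFv : ∀ j, Fv j = F + G * H j)
    (hF : F ^ m = 0)
    (x0 : Fin nx → ℝ)
    (hker : ∀ j, j < m → (H j * stateProd Fv j) *ᵥ x0 = 0) :
    stateProd Fv m *ᵥ x0 = 0 := by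
  have key : ∀ k, k ≤ m → stateProd Fv k *ᵥ x0 = (F ^ k) *ᵥ x0 := by
    intro k
    induction k with
    | zero => intro _; simp [stateProd]
    | succ k ih =>
      intro hk
      have ih' := ih (Nat.le_of_succ_le hk)
      have hk' : k < m := hk
      have h0 := hker k hk'
      rw [← Matrix.mulVec_mulVec] at h0
      calc stateProd Fv (k+1) *ᵥ x0
          = (F + G * H k) *ᵥ (stateProd Fv k *ᵥ x0) := by
            rw [stateProd, hFv, Matrix.mulVec_mulVec]
        _ = F *ᵥ (stateProd Fv k *ᵥ x0) + G *ᵥ (H k *ᵥ (stateProd Fv k *ᵥ x0)) := by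
            rw [Matrix.add_mulVec, ← Matrix.mulVec_mulVec]
        _ = F *ᵥ ((F ^ k) *ᵥ x0) := by rw [h0, ih']; simp
        _ = (F ^ (k+1)) *ᵥ x0 := by rw [pow_succ', ← Matrix.mulVec_mulVec]
  rw [key m le_rfl, hF]; simp
end

section
/- Define N_j = H(j-1) ∏_{i=0}^{j-2} F(i) for j = 1,…,k, where F(i) = F + G H(i). Then for every j, N_j = H(j-1) F^{j-1} + H(j-1) ∑_{i=1}^{j-1} F^{j-1-i} G N_i. Consequently, there exists a lower block-triangular matrix T_k with identity diagonal blocks (hence invertible) such that T_k · O_k = Ō_k, where O_k stacks N_1,…,N_k and Ō_k stacks H(0), H(1)F, H(2)F², …, H(k-1)F^{k-1}. In particular rank O_k = rank Ō_k and ker O_k = ker Ō_k. -/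
open Matrix

theorem obsMat_triangular_transform {nx ny : ℕ} (k : ℕ)
    (F : Matrix (Fin nx) (Fin nx) ℝ) (G : Matrix (Fin nx) (Fin ny) ℝ)
    (H : ℕ → Matrix (Fin ny) (Fin nx) ℝ)
    (Fv : ℕ → Matrix (Fin nx) (Fin nx) ℝ)
    (hFv : ∀ j, Fv j = F + G * H j)
    (N : ℕ → Matrix (Fin ny) (Fin nx) ℝ)
    (hN : ∀ j, 1 ≤ j → N j = H (j - 1) * stateProd Fv (j - 1))
    (O Obar : Matrix (Fin k × Fin ny) (Fin nx) ℝ)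
    (hO : ∀ r c, O r c = (H (r.1 : ℕ) * stateProd Fv (r.1 : ℕ)) r.2 c)
    (hObar : ∀ r c, Obar r c = (H (r.1 : ℕ) * F ^ (r.1 : ℕ)) r.2 c) :
    (∀ j, 1 ≤ j →
        N j = H (j - 1) * F ^ (j - 1) +
          H (j - 1) * ∑ i ∈ Finset.Icc 1 (j - 1), F ^ (j - 1 - i) * G * N i) ∧
    ∃ T : Matrix (Fin k × Fin ny) (Fin k × Fin ny) ℝ,
      (∀ a b : Fin k × Fin ny, (a.1 : ℕ) < (b.1 : ℕ) → T a b = 0) ∧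
      (∀ a b : Fin k × Fin ny, a.1 = b.1 → T a b = if a.2 = b.2 then 1 else 0) ∧
      IsUnit T ∧
      T * O = Obar ∧
      O.rank = Obar.rank ∧
      (∀ v : Fin nx → ℝ, O *ᵥ v = 0 ↔ Obar *ᵥ v = 0) := by
  -- the fundamental expansion of the state product
  have key : ∀ m, stateProd Fv m =
      F ^ m + ∑ i ∈ Finset.Icc 1 m, F ^ (m - i) * G * N i := by
    intro m
    induction m with
    | zero => simp [stateProd]
    | succ m ih =>
      have hNm : N (m + 1) = H m * stateProd Fv m := by
        simpa using hN (m + 1) (by omega)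
      have step : stateProd Fv (m + 1) = F * stateProd Fv m + G * N (m + 1) := by
        rw [stateProd, hFv, hNm, Matrix.add_mul, Matrix.mul_assoc]
      rw [step, ih, Matrix.mul_add, Finset.mul_sum,
        Finset.sum_Icc_succ_top (by omega : 1 ≤ m + 1)]
      have h1 : F * F ^ m = F ^ (m + 1) := (pow_succ' F m).symm
      have h2 : ∀ i ∈ Finset.Icc 1 m,
          F * (F ^ (m - i) * G * N i) = F ^ (m + 1 - i) * G * N i := by
        intro i hi
        simp only [Finset.mem_Icc] at hi
        rw [← Matrix.mul_assoc, ← Matrix.mul_assoc, ← pow_succ']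
        congr 3
        omega
      rw [Finset.sum_congr rfl h2, h1]
      simp [add_assoc]
  have part1 : ∀ j, 1 ≤ j →
      N j = H (j - 1) * F ^ (j - 1) +
        H (j - 1) * ∑ i ∈ Finset.Icc 1 (j - 1), F ^ (j - 1 - i) * G * N i := by
    intro j hj
    rw [hN j hj, key (j - 1), Matrix.mul_add]
  refine ⟨part1, ?_⟩
  -- matrix-level identity, reindexed over range
  have key2 : ∀ j : ℕ, H j * F ^ j =
      N (j + 1) - ∑ m ∈ Finset.range j, H j * F ^ (j - 1 - m) * G * N (m + 1) := by
    intro j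
    have h := part1 (j + 1) (by omega)
    simp only [Nat.add_sub_cancel] at h
    have hre : ∑ i ∈ Finset.Icc 1 j, F ^ (j - i) * G * N i =
        ∑ m ∈ Finset.range j, F ^ (j - 1 - m) * G * N (m + 1) := by
      rw [← Finset.Ico_add_one_right_eq_Icc, Finset.sum_Ico_eq_sum_range]
      apply Finset.sum_congr (by norm_num)
      intro m hm
      simp only [Finset.mem_range] at hm
      have h2 : j - (1 + m) = j - 1 - m := by omega
      have h1 : 1 + m = m + 1 := by omega
      rw [h2, h1]
    rw [hre] at h
    rw [h, Matrix.mul_sum]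
    simp only [← Matrix.mul_assoc]
    rw [add_sub_cancel_right]
  -- entries of O are entries of N
  have hON : ∀ (m : Fin k) (q : Fin ny) (c : Fin nx),
      O (m, q) c = N ((m : ℕ) + 1) q c := by
    intro m q c
    rw [hO]
    rw [hN ((m : ℕ) + 1) (by omega)]
    simp
  classical
  set T : Matrix (Fin k × Fin ny) (Fin k × Fin ny) ℝ := fun a b =>
    if (a.1 : ℕ) = (b.1 : ℕ) then (if a.2 = b.2 then 1 else 0)
    else if (b.1 : ℕ) < (a.1 : ℕ) then
      (-(H (a.1 : ℕ) * F ^ ((a.1 : ℕ) - 1 - (b.1 : ℕ)) * G)) a.2 b.2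
    else 0 with hT
  have prop1 : ∀ a b : Fin k × Fin ny, (a.1 : ℕ) < (b.1 : ℕ) → T a b = 0 := by
    intro a b hab
    simp only [hT]
    rw [if_neg (by omega), if_neg (by omega)]
  have prop2 : ∀ a b : Fin k × Fin ny, a.1 = b.1 →
      T a b = if a.2 = b.2 then 1 else 0 := by
    intro a b hab
    simp only [hT]
    rw [if_pos (by rw [hab])]
  have hTO : T * O = Obar := by
    ext a c
    obtain ⟨j, p⟩ := a
    rw [hObar]
    rw [Matrix.mul_apply, Fintype.sum_prod_type]
    have inner : ∀ m : Fin k, ∑ q : Fin ny, T (j, p) (m, q) * O (m, q) c =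
        (if (m : ℕ) = (j : ℕ) then N ((j : ℕ) + 1) p c
         else if (m : ℕ) < (j : ℕ) then
           -((H (j : ℕ) * F ^ ((j : ℕ) - 1 - (m : ℕ)) * G * N ((m : ℕ) + 1)) p c)
         else 0) := by
      intro m
      by_cases hmj : (m : ℕ) = (j : ℕ)
      · have : m = j := Fin.ext hmj
        subst this
        rw [if_pos rfl]
        simp only [hT, if_pos rfl]
        simp only [hON]
        rw [Finset.sum_eq_single p]
        · simp
        · intro q _ hq; simp [Ne.symm hq]
        · simp
      · rw [if_neg hmj]
        by_cases hlt : (m : ℕ) < (j : ℕ)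
        · rw [if_pos hlt]
          have : ∀ q, T (j, p) (m, q) =
              (-(H (j : ℕ) * F ^ ((j : ℕ) - 1 - (m : ℕ)) * G)) p q := by
            intro q
            simp only [hT]
            rw [if_neg (by omega), if_pos (by omega)]
          simp only [this, hON]
          rw [← Matrix.mul_apply]
          simp [Matrix.mul_assoc]
        · rw [if_neg hlt]
          have : ∀ q, T (j, p) (m, q) = 0 := by
            intro q
            simp only [hT]
            rw [if_neg (by omega), if_neg (by omega)]
          simp [this]
    rw [Finset.sum_congr rfl (fun m _ => inner m)]
    -- sum over Fin k → sum over range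
    have hfin : ∑ m : Fin k,
        (if (m : ℕ) = (j : ℕ) then N ((j : ℕ) + 1) p c
         else if (m : ℕ) < (j : ℕ) then
           -((H (j : ℕ) * F ^ ((j : ℕ) - 1 - (m : ℕ)) * G * N ((m : ℕ) + 1)) p c)
         else 0) =
        N ((j : ℕ) + 1) p c -
          ∑ m ∈ Finset.range (j : ℕ),
            (H (j : ℕ) * F ^ ((j : ℕ) - 1 - m) * G * N (m + 1)) p c := by
      rw [Fin.sum_univ_eq_sum_range
        (fun m => (if m = (j : ℕ) then N ((j : ℕ) + 1) p c
         else if m < (j : ℕ) then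
           -((H (j : ℕ) * F ^ ((j : ℕ) - 1 - m) * G * N (m + 1)) p c)
         else 0))]
      rw [← Finset.sum_subset (Finset.range_subset_range.mpr j.isLt)
        (by intro x _ hx; simp only [Finset.mem_range] at hx
            rw [if_neg (by omega), if_neg (by omega)])]
      rw [Finset.sum_range_succ, if_pos rfl]
      rw [Finset.sum_congr rfl (fun m hm => by
        simp only [Finset.mem_range] at hm
        rw [if_neg (by omega), if_pos hm])]
      rw [Finset.sum_neg_distrib]
      ring
    rw [hfin]
    have := congrArg (fun M => M p c) (key2 (j : ℕ))
    simp only [Matrix.sub_apply] at this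
    rw [this]
    congr 1
    rw [Matrix.sum_apply]
  -- T is lower triangular w.r.t. the lexicographic order, hence has det 1
  have hdet : IsUnit T.det := by
    have hre : T.det = ((Matrix.reindex (toLex (α := Fin k × Fin ny)) toLex) T).det :=
      (Matrix.det_reindex_self _ _).symm
    have htri : ((Matrix.reindex (toLex (α := Fin k × Fin ny)) toLex) T).BlockTriangular
        OrderDual.toDual := by
      intro a b hab
      have hab' : toLex (ofLex a) < toLex (ofLex b) := OrderDual.toDual_lt_toDual.mp hab
      rw [Prod.Lex.lt_iff] at hab'
      simp only [Matrix.reindex_apply, Matrix.submatrix_apply]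
      rcases hab' with h1 | ⟨h1, h2⟩
      · exact prop1 _ _ (by exact_mod_cast h1)
      · have hp := prop2 (toLex.symm a) (toLex.symm b) h1
        rw [hp]
        exact if_neg (ne_of_lt h2)
    rw [hre, Matrix.det_of_lowerTriangular _ htri]
    have : ∀ i, ((Matrix.reindex (toLex (α := Fin k × Fin ny)) toLex) T) i i = 1 := by
      intro i
      simp only [Matrix.reindex_apply, Matrix.submatrix_apply]
      rw [prop2 _ _ rfl, if_pos rfl]
    simp [this]
  have hUnit : IsUnit T := (Matrix.isUnit_iff_isUnit_det T).mpr hdet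
  refine ⟨T, prop1, prop2, hUnit, hTO, ?_, ?_⟩
  · rw [← hTO, Matrix.rank_mul_eq_right_of_isUnit_det T O hdet]
  · intro v
    constructor
    · intro h
      rw [← hTO, ← Matrix.mulVec_mulVec, h, Matrix.mulVec_zero]
    · intro h
      obtain ⟨u, hu⟩ := hUnit
      have : O = (↑u⁻¹ : Matrix (Fin k × Fin ny) (Fin k × Fin ny) ℝ) * Obar := by
        rw [← hTO, ← hu, ← Matrix.mul_assoc, Units.inv_mul, Matrix.one_mul]
      rw [this, ← Matrix.mulVec_mulVec, h, Matrix.mulVec_zero]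
end

section
/- Suppose n_a ≥ 1, n_b ≥ 2 and n_x = n_y·n_a + n_u·(n_b−1), with F = blkdiag(F_a, F_b) where F_a^{n_a} = 0 and F_b^{n_b−1} = 0, and H(i) = [−A(i) | B(i)] with A(i) ∈ ℝ^{n_y×n_y n_a}, B(i) ∈ ℝ^{n_y×n_u(n_b−1)}. If n_a ≥ n_b−1, then rank Ō_k ≤ n_a·n_y < n_x for every k, where Ō_k stacks H(0), H(1)F, …, H(k−1)F^{k−1}. Hence the kernel of Ō_k is nontrivial. -/
open Matrix

lemma myFromBlocks_pow {m n : Type*} [Fintype m] [Fintype n] [DecidableEq m] [DecidableEq n]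
    (A : Matrix m m ℝ) (B : Matrix n n ℝ) (i : ℕ) :
    (Matrix.fromBlocks A 0 0 B) ^ i = Matrix.fromBlocks (A ^ i) 0 0 (B ^ i) := by
  induction i with
  | zero => simp [Matrix.fromBlocks_one]
  | succ n ih =>
      rw [pow_succ, pow_succ, pow_succ, ih, Matrix.fromBlocks_multiply]
      simp

theorem obsMat_rank_deficient_case_na_ge {ny nu na nb : ℕ}
    (hna : 1 ≤ na) (hnb : 2 ≤ nb) (hnu : 1 ≤ nu)
    (hcase : nb - 1 ≤ na)
    (Fa : Matrix (Fin (ny * na)) (Fin (ny * na)) ℝ)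
    (Fb : Matrix (Fin (nu * (nb - 1))) (Fin (nu * (nb - 1))) ℝ)
    (hFa : Fa ^ na = 0) (hFb : Fb ^ (nb - 1) = 0)
    (A : ℕ → Matrix (Fin ny) (Fin (ny * na)) ℝ)
    (B : ℕ → Matrix (Fin ny) (Fin (nu * (nb - 1))) ℝ)
    (F : Matrix (Fin (ny * na) ⊕ Fin (nu * (nb - 1)))
         (Fin (ny * na) ⊕ Fin (nu * (nb - 1))) ℝ)
    (hF : F = Matrix.fromBlocks Fa 0 0 Fb)
    (H : ℕ → Matrix (Fin ny) (Fin (ny * na) ⊕ Fin (nu * (nb - 1))) ℝ)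
    (hH : ∀ i, H i = Matrix.fromCols (-(A i)) (B i))
    (k : ℕ)
    (Obar : Matrix (Fin k × Fin ny) (Fin (ny * na) ⊕ Fin (nu * (nb - 1))) ℝ)
    (hObar : ∀ r c, Obar r c = (H (r.1 : ℕ) * F ^ (r.1 : ℕ)) r.2 c) :
    Obar.rank ≤ na * ny ∧ na * ny < ny * na + nu * (nb - 1) ∧
      ∃ v : (Fin (ny * na) ⊕ Fin (nu * (nb - 1))) → ℝ, v ≠ 0 ∧ Obar *ᵥ v = 0 := by
  have hFzero : ∀ i : ℕ, na ≤ i → F ^ i = 0 := by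
    intro i hi
    have ha : Fa ^ i = 0 := by
      have : Fa ^ i = Fa ^ na * Fa ^ (i - na) := by
        rw [← pow_add]; congr 1; omega
      rw [this, hFa, zero_mul]
    have hb : Fb ^ i = 0 := by
      have : Fb ^ i = Fb ^ (nb - 1) * Fb ^ (i - (nb - 1)) := by
        rw [← pow_add]; congr 1; omega
      rw [this, hFb, zero_mul]
    rw [hF, myFromBlocks_pow, ha, hb]
    ext x y
    rcases x with x | x <;> rcases y with y | y <;> simp
  -- factorization
  let M : Matrix (Fin na × Fin ny) (Fin (ny * na) ⊕ Fin (nu * (nb - 1))) ℝ :=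
    fun p c => (H (p.1 : ℕ) * F ^ (p.1 : ℕ)) p.2 c
  let C : Matrix (Fin k × Fin ny) (Fin na × Fin ny) ℝ :=
    fun p q => if (p.1 : ℕ) = (q.1 : ℕ) ∧ p.2 = q.2 then 1 else 0
  have hfact : Obar = C * M := by
    ext ⟨i, r⟩ c
    rw [Matrix.mul_apply, hObar]
    by_cases hi : (i : ℕ) < na
    · rw [Finset.sum_eq_single (⟨⟨(i : ℕ), hi⟩, r⟩ : Fin na × Fin ny)]
      · simp [C, M]
      · intro b _ hb
        have : ¬((i : ℕ) = (b.1 : ℕ) ∧ r = b.2) := by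
          rintro ⟨h1, h2⟩
          apply hb
          ext
          · exact h1.symm
          · exact congrArg Fin.val h2.symm
        simp [C, this]
      · intro h; exact absurd (Finset.mem_univ _) h
    · have hz : H (i : ℕ) * F ^ (i : ℕ) = 0 := by
        rw [hFzero (i : ℕ) (le_of_not_gt hi)]; exact Matrix.mul_zero _
      have hrow : ∀ b : Fin na × Fin ny, C (i, r) b = 0 := by
        intro b
        have : ¬((i : ℕ) = (b.1 : ℕ) ∧ r = b.2) := by
          rintro ⟨h1, _⟩
          have := b.1.isLt
          omega
        simp [C, this]
      simp [hz, hrow]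
  have hrank : Obar.rank ≤ na * ny := by
    rw [hfact]
    calc (C * M).rank ≤ M.rank := Matrix.rank_mul_le_right C M
      _ ≤ Fintype.card (Fin na × Fin ny) := Matrix.rank_le_card_height M
      _ = na * ny := by simp
  have hpos : 0 < nu * (nb - 1) := Nat.mul_pos (by omega) (by omega)
  have hcomm : na * ny = ny * na := Nat.mul_comm na ny
  refine ⟨hrank, by omega, ?_⟩
  -- nontrivial kernel
  have hkey := LinearMap.finrank_range_add_finrank_ker Obar.mulVecLin
  have hdom : Module.finrank ℝ ((Fin (ny * na) ⊕ Fin (nu * (nb - 1))) → ℝ)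
      = ny * na + nu * (nb - 1) := by
    simp [Module.finrank_pi]
  have hrr : Obar.rank = Module.finrank ℝ (LinearMap.range Obar.mulVecLin) := rfl
  have hkerpos : 0 < Module.finrank ℝ (LinearMap.ker Obar.mulVecLin) := by omega
  have hne : LinearMap.ker Obar.mulVecLin ≠ ⊥ := by
    intro h
    rw [h] at hkerpos
    simp at hkerpos
  obtain ⟨v, hv, hv0⟩ := Submodule.exists_mem_ne_zero_of_ne_bot hne
  refine ⟨v, hv0, ?_⟩
  rw [LinearMap.mem_ker, Matrix.mulVecLin_apply] at hv
  exact hv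
end

section
/- Let A_1, …, A_{n_a} ∈ ℝ^{n_y×n_y} and suppose rank A_{n_a}(p) = n_y for all p in the index set. Then the (n_a)-step observability matrix of the system x_{k+1} = (F_a − G_a A(p_k)) x_k, y_k = −A(p_k) x_k, where A(p) = [A_1(p), …, A_{n_a}(p)], has trivial kernel for every scheduling sequence; i.e., the block anti-triangular matrix with block rows [−A_1(p_0), …, −A_{n_a}(p_0)], [−A_2(p_1), …, −A_{n_a}(p_1), 0], …, [−A_{n_a}(p_{n_a−1}), 0, …, 0] has rank n_y·n_a if and only if each A_{n_a}(p_j), j = 0, …, n_a−1, is invertible. -/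
open Matrix

/-- The block anti-upper-triangular observability matrix of the inverse-FIR realization:
block row `j`, block column `i` equals `−A_{j+i+1}(p_j)` when `j+i+1 ≤ n_a` and `0` otherwise. -/
def invFirObs {P : Type*} {ny : ℕ} (na : ℕ) (A : ℕ → P → Matrix (Fin ny) (Fin ny) ℝ)
    (p : ℕ → P) : Matrix (Fin na × Fin ny) (Fin na × Fin ny) ℝ :=
  fun r c =>
    if (r.1 : ℕ) + (c.1 : ℕ) + 1 ≤ na then
      (-(A ((r.1 : ℕ) + (c.1 : ℕ) + 1) (p (r.1 : ℕ)))) r.2 c.2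
    else 0

lemma invFirObs_det_ne_zero_iff {P : Type*} {ny : ℕ} (na : ℕ)
    (A : ℕ → P → Matrix (Fin ny) (Fin ny) ℝ) (p : ℕ → P) :
    (invFirObs na A p).det ≠ 0 ↔ ∀ j : Fin na, IsUnit (A na (p (j : ℕ))) := by
  classical
  set e : (Fin na × Fin ny) ≃ (Fin na × Fin ny) :=
    (Fin.revPerm.prodCongr (Equiv.refl (Fin ny))) with he
  set M : Matrix (Fin na × Fin ny) (Fin na × Fin ny) ℝ :=
    (invFirObs na A p).submatrix id e with hM
  have hlow : ∀ r c : Fin na × Fin ny, (c.1 : ℕ) < (r.1 : ℕ) → M r c = 0 := by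
    intro r c hlt
    rcases r with ⟨r1, r2⟩; rcases c with ⟨c1, c2⟩
    simp only [hM, he, submatrix_apply, id, Equiv.prodCongr_apply, Prod.map,
      Fin.revPerm_apply, invFirObs, Fin.val_rev]
    have hle : ¬ ((r1 : ℕ) + (na - ((c1 : ℕ) + 1)) + 1 ≤ na) := by
      have := c1.2
      have := r1.2
      simp only at hlt
      omega
    simp [hle]
  have hdiag : ∀ (k : Fin na) (i j : Fin ny),
      M (k, i) (k, j) = (-(A na (p (k : ℕ)))) i j := by
    intro k i j
    simp only [hM, he, submatrix_apply, id, Equiv.prodCongr_apply, Prod.map,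
      Fin.revPerm_apply, invFirObs, Fin.val_rev]
    have h2 : (k : ℕ) + (na - ((k : ℕ) + 1)) + 1 = na := by
      have := k.2
      omega
    simp [h2]
  -- M is block (upper) triangular with respect to the first coordinate
  have hBT : BlockTriangular M (Prod.fst) := by
    intro r c hlt
    exact hlow r c (Fin.lt_def.mp hlt)
  have hdetM : M.det = ∏ k : Fin na, (M.toSquareBlock Prod.fst k).det :=
    hBT.det_fintype
  -- each diagonal block has the determinant of -(A na (p k))
  have hblock : ∀ k : Fin na,
      (M.toSquareBlock Prod.fst k).det = (-(A na (p (k : ℕ)))).det := by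
    intro k
    let eb : Fin ny ≃ {a : Fin na × Fin ny // a.1 = k} :=
      { toFun := fun i => ⟨(k, i), rfl⟩
        invFun := fun a => a.1.2
        left_inv := fun i => rfl
        right_inv := fun a => by
          rcases a with ⟨⟨a1, a2⟩, ha⟩
          simp only at ha
          subst ha
          rfl }
    have heq : (M.toSquareBlock Prod.fst k) =
        (-(A na (p (k : ℕ)))).submatrix eb.symm eb.symm := by
      ext a b
      rcases a with ⟨⟨a1, a2⟩, ha⟩
      rcases b with ⟨⟨b1, b2⟩, hb⟩
      simp only at ha hb
      subst ha; subst hb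
      show M (b1, a2) (b1, b2) = (-(A na (p (b1 : ℕ)))) (eb.symm ⟨(b1, a2), rfl⟩) (eb.symm ⟨(b1, b2), rfl⟩)
      rw [hdiag]
      rfl
    rw [heq, det_submatrix_equiv_self]
  -- relate det of M and det of invFirObs
  have hdet0 : (invFirObs na A p).det = 0 ↔ M.det = 0 := by
    have := Matrix.det_permute' (σ := e) (M := invFirObs na A p)
    constructor
    · intro h
      rw [hM]
      show ((invFirObs na A p).submatrix id e).det = 0
      rw [show ((invFirObs na A p).submatrix id ⇑e) = (invFirObs na A p).submatrix id ⇑e from rfl,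
        this, h, mul_zero]
    · intro h
      rw [hM] at h
      rw [this] at h
      rcases mul_eq_zero.mp h with h' | h'
      · exfalso
        have : (Equiv.Perm.sign e : ℝ) ≠ 0 := by
          rcases Int.units_eq_one_or (Equiv.Perm.sign e) with hs | hs <;> simp [hs]
        exact this h'
      · exact h'
  constructor
  · intro h j
    have hMdet : M.det ≠ 0 := fun hc => h (hdet0.mpr hc)
    rw [hdetM] at hMdet
    have := Finset.prod_ne_zero_iff.mp hMdet j (Finset.mem_univ _)
    rw [hblock j] at this
    have : IsUnit (-(A na (p (j : ℕ)))).det := isUnit_iff_ne_zero.mpr this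
    have hu : IsUnit (-(A na (p (j : ℕ)))) := (Matrix.isUnit_iff_isUnit_det _).mpr this
    simpa using hu.neg
  · intro h hc
    have hMdet : M.det = 0 := hdet0.mp hc
    rw [hdetM] at hMdet
    rcases Finset.prod_eq_zero_iff.mp hMdet with ⟨j, _, hj⟩
    rw [hblock j] at hj
    have hu : IsUnit (-(A na (p (j : ℕ)))) := (h j).neg
    have := ((Matrix.isUnit_iff_isUnit_det _).mp hu)
    rw [hj] at this
    exact (isUnit_iff_ne_zero.mp this) rfl

theorem invFir_observability {P : Type*} {ny : ℕ} (na : ℕ) (hna : 1 ≤ na)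
    (A : ℕ → P → Matrix (Fin ny) (Fin ny) ℝ) :
    ((∀ q : P, IsUnit (A na q)) →
      ∀ (p : ℕ → P) (v : Fin na × Fin ny → ℝ), invFirObs na A p *ᵥ v = 0 → v = 0) ∧
    (∀ p : ℕ → P,
      (invFirObs na A p).rank = ny * na ↔ ∀ j : Fin na, IsUnit (A na (p (j : ℕ)))) := by
  classical
  have hcard : Fintype.card (Fin na × Fin ny) = ny * na := by
    simp [Fintype.card_prod, Nat.mul_comm]
  constructor
  · intro h p v hv
    have hdet : (invFirObs na A p).det ≠ 0 :=
      (invFirObs_det_ne_zero_iff na A p).mpr fun j => h _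
    by_contra hvne
    exact hdet ((Matrix.exists_mulVec_eq_zero_iff).mp ⟨v, hvne, hv⟩)
  · intro p
    constructor
    · intro hrank
      rw [← invFirObs_det_ne_zero_iff na A p]
      intro hdet
      rcases (Matrix.exists_mulVec_eq_zero_iff).mpr hdet with ⟨v, hvne, hv⟩
      -- rank = card implies mulVecLin surjective hence injective, contradiction
      have hr : (invFirObs na A p).rank = Fintype.card (Fin na × Fin ny) := by
        rw [hrank, hcard]
      have hinj : Function.Injective (invFirObs na A p).mulVecLin := by
        rw [← LinearMap.ker_eq_bot]
        have hrange : LinearMap.range (invFirObs na A p).mulVecLin = ⊤ := by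
          apply Submodule.eq_top_of_finrank_eq
          rw [← Matrix.rank, hr]
          simp [Module.finrank_fintype_fun_eq_card]
        rw [LinearMap.ker_eq_bot]
        exact (LinearMap.injective_iff_surjective_of_finrank_eq_finrank rfl).mpr
          (LinearMap.range_eq_top.mp hrange)
      exact hvne (hinj (a₁ := v) (a₂ := 0) (by simpa using hv))
    · intro h
      have hdet : (invFirObs na A p).det ≠ 0 :=
        (invFirObs_det_ne_zero_iff na A p).mpr h
      have hu : IsUnit (invFirObs na A p) :=
        (Matrix.isUnit_iff_isUnit_det _).mpr (isUnit_iff_ne_zero.mpr hdet)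
      rw [Matrix.rank_of_isUnit _ hu, hcard]
end
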